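/- Let N, d ≥ 1, B > 0, ε ≥ 0, let W ∈ ℝ^{N×N} be doubly stochastic with ‖W − (1/N)𝟙𝟙ᵀ‖_* ≤ 1, let Θ ∈ ℝ^{N×d} have rows θ_1,…,θ_N with row average θ̄ and consensus error S = ∑_i ‖θ_i − θ̄‖², and let G ∈ ℝ^{N×d} have rows g_1,…,g_N with ‖g_i‖ ≤ B(‖θ_i‖+1) for all i. Set Θ' = WΘ + εG, with row average θ̄' and consensus error S'. Then, writing y = ‖θ̄‖ + √S and y' = ‖θ̄'‖ + √S', one has y' ≤ (1 + 2NεB) y + 2NεB. -/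

import Mathlib

/-- Euclidean norm of a vector in `ℝ^d` given as a plain function. -/
noncomputable def enorm' {d : ℕ} (v : Fin d → ℝ) : ℝ :=
  ‖(WithLp.equiv 2 (Fin d → ℝ)).symm v‖

/-- Spectral (ℓ₂ operator) norm of a square matrix. -/
noncomputable def specNorm {N : ℕ} (M : Matrix (Fin N) (Fin N) ℝ) : ℝ :=
  ‖Matrix.toEuclideanCLM (𝕜 := ℝ) M‖

/-- A matrix is doubly stochastic: nonnegative entries, all row sums and column sums equal 1. -/
def DoublyStochastic {N : ℕ} (W : Matrix (Fin N) (Fin N) ℝ) : Prop :=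
  (∀ i j, 0 ≤ W i j) ∧ (∀ i, ∑ j, W i j = 1) ∧ (∀ j, ∑ i, W i j = 1)

/-- Row average of a matrix `Θ ∈ ℝ^{N×d}`: `θ̄ = (1/N) Θᵀ 𝟙`. -/
noncomputable def rowAvg {N d : ℕ} (Θ : Matrix (Fin N) (Fin d) ℝ) : Fin d → ℝ :=
  fun j => (N : ℝ)⁻¹ * ∑ i, Θ i j

/-- Consensus error `S = ∑ᵢ ‖θᵢ − θ̄‖²` of a matrix of stacked iterates. -/
noncomputable def consErr {N d : ℕ} (Θ : Matrix (Fin N) (Fin d) ℝ) : ℝ :=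
  ∑ i, (enorm' (fun j => Θ i j - rowAvg Θ j)) ^ 2

/-! Column sums of `W` equal to one give `θ̄' = θ̄ + ε ḡ`. Row sums equal to one make the
centering projection `P = I - 𝟙𝟙ᵀ/N` satisfy `P W = (W - 𝟙𝟙ᵀ/N) P`, so the centered iterate is
`P Θ' = (W - 𝟙𝟙ᵀ/N) P Θ + ε P G`, and in Frobenius norm `√S' ≤ √S + ε ‖P G‖ ≤ √S + ε ∑ᵢ ‖gᵢ‖`.
Since every row satisfies `‖θᵢ‖ ≤ ‖θ̄‖ + √S = y`, the growth bound gives `∑ᵢ ‖gᵢ‖ ≤ N B (y + 1)`,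
which controls both `‖ḡ‖` and `‖P G‖`. -/

open WithLp Matrix

attribute [local instance] Matrix.frobeniusNormedAddCommGroup Matrix.frobeniusNormedSpace

section Frobenius
variable {m n α : Type*} [Fintype m] [Fintype n] [NormedAddCommGroup α]

lemma Matrix.frobenius_norm_sq_eq_sum_norm_row_sq (X : Matrix m n α) :
    ‖X‖ ^ 2 = ∑ i, ‖toLp 2 (X i)‖ ^ 2 :=
  PiLp.norm_sq_eq_of_L2 _ (toLp 2 fun i => toLp 2 (X i))

lemma Matrix.norm_row_le_frobenius_norm (X : Matrix m n α) (i : m) :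
    ‖toLp 2 (X i)‖ ≤ ‖X‖ :=
  PiLp.norm_apply_le (toLp 2 fun i => toLp 2 (X i)) i

lemma Matrix.frobenius_norm_le_sum_norm_row (X : Matrix m n α) :
    ‖X‖ ≤ ∑ i, ‖toLp 2 (X i)‖ := by
  refine le_of_sq_le_sq ?_ (Finset.sum_nonneg fun i _ => norm_nonneg _)
  rw [X.frobenius_norm_sq_eq_sum_norm_row_sq]
  exact Finset.sum_sq_le_sq_sum_of_nonneg fun i _ => norm_nonneg _

lemma Matrix.frobenius_norm_mul_le_l2_opNorm_mul {𝕜 : Type*} [RCLike 𝕜] [DecidableEq n]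
    (M : Matrix n n 𝕜) (X : Matrix n m 𝕜) :
    ‖M * X‖ ≤ ‖toEuclideanCLM (n := n) (𝕜 := 𝕜) M‖ * ‖X‖ := by
  set T := toEuclideanCLM (n := n) (𝕜 := 𝕜) M
  have hcol (j : m) : toLp 2 ((M * X)ᵀ j) = T (toLp 2 (Xᵀ j)) := by
    rw [toEuclideanCLM_toLp]; rfl
  rw [← frobenius_norm_transpose, ← frobenius_norm_transpose X]
  refine le_of_sq_le_sq ?_ (by positivity)
  rw [mul_pow, frobenius_norm_sq_eq_sum_norm_row_sq, frobenius_norm_sq_eq_sum_norm_row_sq,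
    Finset.mul_sum]
  gcongr with j
  rw [hcol, ← mul_pow]
  gcongr
  exact T.le_opNorm _

end Frobenius

lemma sum_norm_sub_average_sq_le_sum_norm_sq {ι E : Type*} [Fintype ι] [NormedAddCommGroup E]
    [InnerProductSpace ℝ E] (x : ι → E) :
    ∑ i, ‖x i - (Fintype.card ι : ℝ)⁻¹ • ∑ j, x j‖ ^ 2 ≤ ∑ i, ‖x i‖ ^ 2 := by
  rcases isEmpty_or_nonempty ι with hι | hι
  · simp
  set μ := (Fintype.card ι : ℝ)⁻¹ • ∑ j, x j
  have hdev : ∑ i, (x i - μ) = 0 := by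
    rw [Finset.sum_sub_distrib, Finset.sum_const, Finset.card_univ, ← Nat.cast_smul_eq_nsmul ℝ,
      smul_inv_smul₀ (by positivity), sub_self]
  calc ∑ i, ‖x i - μ‖ ^ 2 ≤ ∑ i, ‖x i - μ‖ ^ 2 + Fintype.card ι * ‖μ‖ ^ 2 :=
        le_add_of_nonneg_right (by positivity)
    _ = ∑ i, ‖(x i - μ) + μ‖ ^ 2 := by
        simp_rw [norm_add_sq_real, Finset.sum_add_distrib, ← Finset.mul_sum, ← sum_inner, hdev]
        simp
    _ = ∑ i, ‖x i‖ ^ 2 := by simp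

section RowStatistics
variable {N d : ℕ}

lemma enorm'_eq_norm_toLp (v : Fin d → ℝ) : enorm' v = ‖toLp 2 v‖ := rfl

lemma toLp_rowAvg (X : Matrix (Fin N) (Fin d) ℝ) :
    toLp 2 (rowAvg X) = (N : ℝ)⁻¹ • ∑ i, toLp 2 (X i) := by
  ext j
  simp only [rowAvg, PiLp.smul_apply, ofLp_sum, smul_eq_mul]
  exact congrArg _ (Finset.sum_apply j _ _).symm

lemma norm_toLp_rowAvg_le (X : Matrix (Fin N) (Fin d) ℝ) :
    ‖toLp 2 (rowAvg X)‖ ≤ (N : ℝ)⁻¹ * ∑ i, ‖toLp 2 (X i)‖ := by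
  rw [toLp_rowAvg, norm_smul, Real.norm_of_nonneg (by positivity)]
  gcongr
  exact norm_sum_le _ _

lemma sqrt_consErr_eq_frobenius_norm (X : Matrix (Fin N) (Fin d) ℝ) :
    √(consErr X) = ‖X - replicateRow (Fin N) (rowAvg X)‖ := by
  rw [← Real.sqrt_sq (norm_nonneg _), frobenius_norm_sq_eq_sum_norm_row_sq]
  rfl

lemma norm_row_le_norm_rowAvg_add_sqrt_consErr (X : Matrix (Fin N) (Fin d) ℝ) (i : Fin N) :
    ‖toLp 2 (X i)‖ ≤ ‖toLp 2 (rowAvg X)‖ + √(consErr X) := by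
  have hrow : toLp 2 (X i) =
      toLp 2 ((X - replicateRow (Fin N) (rowAvg X)) i) + toLp 2 (rowAvg X) := by
    ext j; simp
  rw [hrow, sqrt_consErr_eq_frobenius_norm, add_comm ‖toLp 2 (rowAvg X)‖]
  exact (norm_add_le _ _).trans (by gcongr; exact norm_row_le_frobenius_norm _ i)

lemma frobenius_norm_sub_replicateRow_rowAvg_le (X : Matrix (Fin N) (Fin d) ℝ) :
    ‖X - replicateRow (Fin N) (rowAvg X)‖ ≤ ‖X‖ := by
  refine le_of_sq_le_sq ?_ (norm_nonneg _)
  rw [frobenius_norm_sq_eq_sum_norm_row_sq, frobenius_norm_sq_eq_sum_norm_row_sq]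
  have hrow (i : Fin N) : toLp 2 ((X - replicateRow (Fin N) (rowAvg X)) i) =
      toLp 2 (X i) - (Fintype.card (Fin N) : ℝ)⁻¹ • ∑ j, toLp 2 (X j) := by
    rw [Fintype.card_fin, ← toLp_rowAvg]; rfl
  simpa only [hrow] using sum_norm_sub_average_sq_le_sum_norm_sq (fun i => toLp 2 (X i))

lemma rowAvg_add (X Y : Matrix (Fin N) (Fin d) ℝ) : rowAvg (X + Y) = rowAvg X + rowAvg Y := by
  ext j; simp [rowAvg, Finset.sum_add_distrib, mul_add]

lemma rowAvg_smul (c : ℝ) (X : Matrix (Fin N) (Fin d) ℝ) : rowAvg (c • X) = c • rowAvg X := by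
  ext j; simp [rowAvg, ← Finset.mul_sum]; ring

lemma rowAvg_mul_of_sum_col_eq_one {W : Matrix (Fin N) (Fin N) ℝ} (hcol : ∀ j, ∑ i, W i j = 1)
    (X : Matrix (Fin N) (Fin d) ℝ) : rowAvg (W * X) = rowAvg X := by
  ext j
  simp only [rowAvg, Matrix.mul_apply]
  rw [Finset.sum_comm]
  simp [← Finset.sum_mul, hcol]

lemma sub_replicateRow_rowAvg_eq_centering_mul (X : Matrix (Fin N) (Fin d) ℝ) :
    X - replicateRow (Fin N) (rowAvg X) =
      (1 - (N : ℝ)⁻¹ • of fun _ _ => 1 : Matrix (Fin N) (Fin N) ℝ) * X := by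
  rw [Matrix.sub_mul, Matrix.one_mul, Matrix.smul_mul]
  ext i j
  simp [rowAvg, Matrix.mul_apply]

end RowStatistics

section DoublyStochastic
variable {N d : ℕ} {W : Matrix (Fin N) (Fin N) ℝ}

lemma ones_mul_of_sum_col_eq_one (hcol : ∀ j, ∑ i, W i j = 1) :
    (of fun _ _ => 1 : Matrix (Fin N) (Fin N) ℝ) * W = of fun _ _ => 1 := by
  ext i j; simp [Matrix.mul_apply, hcol]

lemma mul_ones_of_sum_row_eq_one (hrow : ∀ i, ∑ j, W i j = 1) :
    W * (of fun _ _ => 1 : Matrix (Fin N) (Fin N) ℝ) = of fun _ _ => 1 := by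
  ext i j; simp [Matrix.mul_apply, hrow]

lemma ones_mul_ones :
    (of fun _ _ => 1 : Matrix (Fin N) (Fin N) ℝ) * (of fun _ _ => 1) =
      (N : ℝ) • of fun _ _ => 1 := by
  ext i j; simp [Matrix.mul_apply]

lemma centering_mul_eq_mul_centering (hrow : ∀ i, ∑ j, W i j = 1)
    (hcol : ∀ j, ∑ i, W i j = 1) :
    (1 - (N : ℝ)⁻¹ • of fun _ _ => 1 : Matrix (Fin N) (Fin N) ℝ) * W =
      (W - (N : ℝ)⁻¹ • of fun _ _ => 1) * (1 - (N : ℝ)⁻¹ • of fun _ _ => 1) := by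
  rcases N.eq_zero_or_pos with rfl | hN
  · exact Subsingleton.elim _ _
  have hN : (N : ℝ) ≠ 0 := by positivity
  simp only [Matrix.sub_mul, Matrix.mul_sub, Matrix.smul_mul, Matrix.mul_smul, Matrix.one_mul,
    Matrix.mul_one, ones_mul_of_sum_col_eq_one hcol, mul_ones_of_sum_row_eq_one hrow,
    ones_mul_ones, smul_smul, inv_mul_cancel₀ hN]
  module

lemma rowAvg_mul_add_smul (hcol : ∀ j, ∑ i, W i j = 1) (Θ G : Matrix (Fin N) (Fin d) ℝ)
    (ε : ℝ) : rowAvg (W * Θ + ε • G) = rowAvg Θ + ε • rowAvg G := by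
  rw [rowAvg_add, rowAvg_smul, rowAvg_mul_of_sum_col_eq_one hcol]

lemma sub_replicateRow_rowAvg_mul_add_smul (hrow : ∀ i, ∑ j, W i j = 1)
    (hcol : ∀ j, ∑ i, W i j = 1) (Θ G : Matrix (Fin N) (Fin d) ℝ) (ε : ℝ) :
    W * Θ + ε • G - replicateRow (Fin N) (rowAvg (W * Θ + ε • G)) =
      (W - (N : ℝ)⁻¹ • of fun _ _ => 1) * (Θ - replicateRow (Fin N) (rowAvg Θ)) +
        ε • (G - replicateRow (Fin N) (rowAvg G)) := by
  simp only [sub_replicateRow_rowAvg_eq_centering_mul, Matrix.mul_add, Matrix.mul_smul,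
    ← Matrix.mul_assoc, centering_mul_eq_mul_centering hrow hcol]

end DoublyStochastic

theorem y_recursion_step_general (N d : ℕ) (hN : 1 ≤ N)
    (B ε : ℝ) (hB : 0 < B) (hε : 0 ≤ ε)
    (W : Matrix (Fin N) (Fin N) ℝ) (hW : DoublyStochastic W)
    (hWspec : specNorm (W - (N : ℝ)⁻¹ •
      Matrix.of (fun (_ : Fin N) (_ : Fin N) => (1 : ℝ))) ≤ 1)
    (Θ G : Matrix (Fin N) (Fin d) ℝ)
    (hG : ∀ i, enorm' (fun j => G i j) ≤ B * (enorm' (fun j => Θ i j) + 1))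
    (Θ' : Matrix (Fin N) (Fin d) ℝ) (hΘ' : Θ' = W * Θ + ε • G) :
    enorm' (rowAvg Θ') + Real.sqrt (consErr Θ')
      ≤ (1 + 2 * N * ε * B) * (enorm' (rowAvg Θ) + Real.sqrt (consErr Θ))
        + 2 * N * ε * B := by
  obtain ⟨-, hrow, hcol⟩ := hW
  simp only [enorm'_eq_norm_toLp] at hG ⊢
  set y := ‖toLp 2 (rowAvg Θ)‖ + √(consErr Θ)
  have hGsum : ∑ i, ‖toLp 2 (G i)‖ ≤ N * (B * (y + 1)) :=
    calc ∑ i, ‖toLp 2 (G i)‖ ≤ ∑ _i : Fin N, B * (y + 1) :=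
          Finset.sum_le_sum fun i _ =>
            (hG i).trans (by gcongr; exact norm_row_le_norm_rowAvg_add_sqrt_consErr Θ i)
      _ = N * (B * (y + 1)) := by simp
  have hmean : ‖toLp 2 (rowAvg Θ')‖ ≤ ‖toLp 2 (rowAvg Θ)‖ + ε * (B * (y + 1)) := by
    have hGavg : ‖toLp 2 (rowAvg G)‖ ≤ B * (y + 1) :=
      calc ‖toLp 2 (rowAvg G)‖ ≤ (N : ℝ)⁻¹ * (N * (B * (y + 1))) := by
            grw [norm_toLp_rowAvg_le, hGsum]
        _ = B * (y + 1) := inv_mul_cancel_left₀ (by positivity) _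
    rw [hΘ', rowAvg_mul_add_smul hcol, toLp_add, toLp_smul]
    grw [norm_add_le, norm_smul, Real.norm_of_nonneg hε, hGavg]
  have hcons : √(consErr Θ') ≤ √(consErr Θ) + ε * (N * (B * (y + 1))) := by
    have hGcent : ‖G - replicateRow (Fin N) (rowAvg G)‖ ≤ N * (B * (y + 1)) :=
      (frobenius_norm_sub_replicateRow_rowAvg_le G).trans
        ((frobenius_norm_le_sum_norm_row G).trans hGsum)
    rw [sqrt_consErr_eq_frobenius_norm, hΘ', sub_replicateRow_rowAvg_mul_add_smul hrow hcol,
      sqrt_consErr_eq_frobenius_norm]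
    grw [norm_add_le, frobenius_norm_mul_le_l2_opNorm_mul, norm_smul, Real.norm_of_nonneg hε,
      hGcent]
    exact add_le_add_left (mul_le_of_le_one_left (norm_nonneg _) hWspec) _
  have hN' : (1 : ℝ) ≤ N := by exact_mod_cast hN
  have hstep : 0 ≤ ε * (B * (y + 1)) := by positivity
  calc ‖toLp 2 (rowAvg Θ')‖ + √(consErr Θ')
      ≤ y + (1 + N) * (ε * (B * (y + 1))) := by linarith
    _ ≤ y + 2 * N * (ε * (B * (y + 1))) := by gcongr; linarith
    _ = (1 + 2 * N * ε * B) * y + 2 * N * ε * B := by ring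

/-- One-step growth of `y = ‖θ̄‖ + √S`:
`y' ≤ (1 + 2NεB) y + 2NεB`. -/
theorem y_recursion_step (N d : ℕ) (hN : 1 ≤ N) (hd : 1 ≤ d)
    (B ε : ℝ) (hB : 0 < B) (hε : 0 ≤ ε)
    (W : Matrix (Fin N) (Fin N) ℝ) (hW : DoublyStochastic W)
    (hWspec : specNorm (W - (N : ℝ)⁻¹ •
      Matrix.of (fun (_ : Fin N) (_ : Fin N) => (1 : ℝ))) ≤ 1)
    (Θ G : Matrix (Fin N) (Fin d) ℝ)
    (hG : ∀ i, enorm' (fun j => G i j) ≤ B * (enorm' (fun j => Θ i j) + 1))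
    (Θ' : Matrix (Fin N) (Fin d) ℝ) (hΘ' : Θ' = W * Θ + ε • G) :
    enorm' (rowAvg Θ') + Real.sqrt (consErr Θ')
      ≤ (1 + 2 * N * ε * B) * (enorm' (rowAvg Θ) + Real.sqrt (consErr Θ))
        + 2 * N * ε * B :=
  y_recursion_step_general N d hN B ε hB hε W hW hWspec Θ G hG Θ' hΘ'
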